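/- arXiv:0905.0068 — 4 statements merged into one kernel-verified Lean document; each statement's English description precedes it below -/
import Mathlib

section
/- Let c: X × Y → [0,+∞] be a sync with zero set M = c⁻¹(0), and let A ⊆ X × Y. If A is compact for the (weak, weak*) convergence and for every (x,y) the function (x'',y'') ∈ A ↦ c(x - x'', y - y'') is lsc with respect to this convergence, then the inf-convolution c_A = c ∇ χ_A satisfies c_A⁻¹(0) = M + A. -/
noncomputable section

/-- Convexity for `EReal`-valued functions. -/
def ConvexE {V : Type*} [AddCommGroup V] [Module ℝ V] (f : V → EReal) : Prop :=
  ∀ x₁ x₂ : V, ∀ a b : ℝ, 0 ≤ a → 0 ≤ b → a + b = 1 →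
    f (a • x₁ + b • x₂) ≤ (a : EReal) * f x₁ + (b : EReal) * f x₂

/-- `Γ₀`: proper, convex, lower semicontinuous, with values in `ℝ ∪ {+∞}`. -/
def Gamma0 {V : Type*} [AddCommGroup V] [Module ℝ V] [TopologicalSpace V]
    (f : V → EReal) : Prop :=
  (∀ v, f v ≠ ⊥) ∧ (∃ v, f v ≠ ⊤) ∧ ConvexE f ∧ LowerSemicontinuous f

/-- Subdifferential with respect to a pairing `p`. -/
def subdiffE {V W : Type*} [AddCommGroup V] [Module ℝ V]
    (p : V → W → ℝ) (f : V → EReal) (x : V) : Set W :=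
  {u | ∀ z, (p (z - x) u : EReal) + f x ≤ f z}

/-- Bipotential with respect to the duality pairing `p`. -/
def IsBipotential {X Y : Type*} [AddCommGroup X] [Module ℝ X] [TopologicalSpace X]
    [AddCommGroup Y] [Module ℝ Y] [TopologicalSpace Y]
    (p : X → Y → ℝ) (b : X → Y → EReal) : Prop :=
  (∀ x y, b x y ≠ ⊥) ∧
  (∀ x, (∃ y, b x y ≠ ⊤) → Gamma0 (b x)) ∧
  (∀ y, (∃ x, b x y ≠ ⊤) → Gamma0 (fun x => b x y)) ∧
  (∀ x y, (p x y : EReal) ≤ b x y) ∧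
  (∀ x y,
    (y ∈ subdiffE p (fun x' => b x' y) x ↔ b x y = (p x y : EReal)) ∧
    (x ∈ subdiffE (fun y' x' => p x' y') (b x) y ↔ b x y = (p x y : EReal)))

/-- The graph `M(b)` of a bipotential. -/
def MGraph {X Y : Type*} (p : X → Y → ℝ) (b : X → Y → EReal) : Set (X × Y) :=
  {q | b q.1 q.2 = (p q.1 q.2 : EReal)}

/-- Synchronised convex function (sync). -/
def IsSync {X Y : Type*} [AddCommGroup X] [Module ℝ X] [TopologicalSpace X]
    [AddCommGroup Y] [Module ℝ Y] [TopologicalSpace Y]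
    (c : X → Y → EReal) : Prop :=
  (∀ x y, 0 ≤ c x y) ∧
  (∀ x, (∃ y, c x y ≠ ⊤) → Gamma0 (c x)) ∧
  (∀ y, (∃ x, c x y ≠ ⊤) → Gamma0 (fun x => c x y)) ∧
  (∀ x, (∃ y', c x y' ≠ ⊤) → ∀ y, (∀ y', c x y ≤ c x y') → c x y = 0) ∧
  (∀ y, (∃ x', c x' y ≠ ⊤) → ∀ x, (∀ x', c x y ≤ c x' y) → c x y = 0)

/-- A BB-graph: all sections are convex and closed. -/
def IsBBGraph {X Y : Type*} [AddCommGroup X] [Module ℝ X] [TopologicalSpace X]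
    [AddCommGroup Y] [Module ℝ Y] [TopologicalSpace Y] (M : Set (X × Y)) : Prop :=
  (∀ x, Convex ℝ {y | (x, y) ∈ M} ∧ IsClosed {y | (x, y) ∈ M}) ∧
  (∀ y, Convex ℝ {x | (x, y) ∈ M} ∧ IsClosed {x | (x, y) ∈ M})

open scoped Classical Pointwise
open Filter Topology

open Filter Topology

lemma aux_exists_le_zero {α : Type*} [TopologicalSpace α] {s : Set α} (hs : IsCompact s)
    {f : α → EReal} (hf : LowerSemicontinuousOn f s)
    (h : ∀ ε : ℝ, 0 < ε → ∃ x ∈ s, f x < (ε : EReal)) : ∃ x ∈ s, f x ≤ 0 := by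
  set T : {ε : ℝ // 0 < ε} → Set α := fun ε => {x ∈ s | f x < (ε : ℝ)} with hT
  have hTs : ∀ ε, T ε ⊆ s := fun ε x hx => hx.1
  have hTne : ∀ ε, (T ε).Nonempty := fun ε => by
    obtain ⟨x, hx, hfx⟩ := h ε ε.2; exact ⟨x, hx, hfx⟩
  set F : Filter α := ⨅ ε, 𝓟 (T ε) with hF
  have hne : F.NeBot := by
    have : Nonempty {ε : ℝ // 0 < ε} := ⟨⟨1, one_pos⟩⟩
    have : Nonempty α := ⟨(hTne ⟨1, one_pos⟩).choose⟩
    apply Filter.iInf_neBot_of_directed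
    · intro ε₁ ε₂
      refine ⟨⟨min ε₁ ε₂, lt_min ε₁.2 ε₂.2⟩, ?_, ?_⟩ <;>
        · apply Filter.principal_mono.2
          intro x hx
          refine ⟨hx.1, lt_of_lt_of_le hx.2 ?_⟩
          exact_mod_cast EReal.coe_le_coe_iff.2 (by simp [min_le_left, min_le_right])
    · intro ε; exact Filter.principal_neBot_iff.2 (hTne ε)
  have hFs : F ≤ 𝓟 s := iInf_le_of_le ⟨1, one_pos⟩ (Filter.principal_mono.2 (hTs _))
  obtain ⟨x, hxs, hx⟩ := hs hFs
  refine ⟨x, hxs, ?_⟩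
  by_contra h0
  push_neg at h0
  obtain ⟨r, hr0, hrf⟩ := EReal.exists_between_coe_real h0
  have hr0' : 0 < r := by exact_mod_cast hr0
  have hev : ∀ᶠ y in 𝓝[s] x, (r : EReal) < f y := hf x hxs _ hrf
  have hle : 𝓝 x ⊓ F ≤ 𝓝[s] x ⊓ 𝓟 (T ⟨r, hr0'⟩) := by
    have h1 : F ≤ 𝓟 (T ⟨r, hr0'⟩) := iInf_le _ _
    have h2 : F ≤ 𝓟 s := hFs
    exact le_inf (inf_le_inf_left _ h2) (le_trans inf_le_right h1)
  have hx' : (𝓝 x ⊓ F).NeBot := hx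
  have : (𝓝[s] x ⊓ 𝓟 (T ⟨r, hr0'⟩)).NeBot := Filter.neBot_of_le hle
  have hmem : {y | (r : EReal) < f y} ∩ T ⟨r, hr0'⟩ ∈ 𝓝[s] x ⊓ 𝓟 (T ⟨r, hr0'⟩) :=
    Filter.inter_mem (Filter.mem_inf_of_left hev) (Filter.mem_inf_of_right (Filter.mem_principal_self _))
  obtain ⟨y, hy1, hy2⟩ := Filter.nonempty_of_mem hmem
  exact absurd hy2.2 (not_lt.2 hy1.le)


variable {X : Type*} [NormedAddCommGroup X] [NormedSpace ℝ X] [CompleteSpace X]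

/-- The identity map from `X × X*` to the product of `X` with its weak topology
and `X*` with its weak-star topology. -/
def toWeak (q : X × (X →L[ℝ] ℝ)) : WeakSpace ℝ X × WeakDual ℝ X := (q.1, q.2)

/-- if `A` is compact for the (weak, weak*) topology and the translated
sync is lsc on `A` for this topology, then the zero set of the inf-convolution
`c ∇ χ_A` is exactly `M + A`, where `M = c⁻¹(0)`. -/
theorem infConvolution_zeroSet (c : X × (X →L[ℝ] ℝ) → EReal)
    (hsync : IsSync fun x y => c (x, y))
    (A : Set (X × (X →L[ℝ] ℝ)))
    (hAcomp : IsCompact (toWeak '' A))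
    (hlsc : ∀ q : X × (X →L[ℝ] ℝ),
      LowerSemicontinuousOn (fun w : WeakSpace ℝ X × WeakDual ℝ X =>
        c (q.1 - (show X from w.1), q.2 - (show X →L[ℝ] ℝ from w.2))) (toWeak '' A)) :
    {q : X × (X →L[ℝ] ℝ) |
        (⨅ (q' : X × (X →L[ℝ] ℝ)) (q'' : X × (X →L[ℝ] ℝ)) (_ : q' + q'' = q),
          c q' + (if q'' ∈ A then (0 : EReal) else ⊤)) = 0} =
      {q | c q = 0} + A := by
  ext q
  simp only [Set.mem_setOf_eq, Set.mem_add]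
  have hpos : ∀ p : X × (X →L[ℝ] ℝ), 0 ≤ c p := fun p => hsync.1 p.1 p.2
  constructor
  · intro h
    have key : ∀ ε : ℝ, 0 < ε → ∃ a ∈ A, c (q - a) < (ε : EReal) := by
      intro ε hε
      have hlt : (⨅ (q' : X × (X →L[ℝ] ℝ)) (q'' : X × (X →L[ℝ] ℝ)) (_ : q' + q'' = q),
          c q' + (if q'' ∈ A then (0 : EReal) else ⊤)) < (ε : EReal) := by
        rw [h]; exact_mod_cast hε
      simp only [iInf_lt_iff] at hlt
      obtain ⟨q', q'', heq, hv⟩ := hlt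
      by_cases hA : q'' ∈ A
      · refine ⟨q'', hA, ?_⟩
        have hq' : q' = q - q'' := by rw [← heq]; abel
        rw [← hq']
        simpa [hA] using hv
      · exfalso
        rw [if_neg hA, EReal.add_top_of_ne_bot
          (lt_of_lt_of_le (by simp : (⊥ : EReal) < 0) (hpos q')).ne'] at hv
        exact absurd hv (by simp)
    obtain ⟨w, hw, hw0⟩ := aux_exists_le_zero hAcomp (hlsc q) (by
      intro ε hε
      obtain ⟨a, haA, hca⟩ := key ε hε
      exact ⟨toWeak a, ⟨a, haA, rfl⟩, hca⟩)
    obtain ⟨a, haA, rfl⟩ := hw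
    have hc0 : c (q - a) = 0 := le_antisymm hw0 (hpos _)
    exact ⟨q - a, hc0, a, haA, by abel⟩
  · rintro ⟨m, hm, a, ha, rfl⟩
    apply le_antisymm
    · calc (⨅ (q' : X × (X →L[ℝ] ℝ)) (q'' : X × (X →L[ℝ] ℝ)) (_ : q' + q'' = m + a),
            c q' + (if q'' ∈ A then (0 : EReal) else ⊤))
          ≤ c m + (if a ∈ A then (0 : EReal) else ⊤) :=
            iInf_le_of_le m (iInf_le_of_le a (iInf_le _ rfl))
        _ = 0 := by rw [hm, if_pos ha, add_zero]
    · exact le_iInf fun q' => le_iInf fun q'' => le_iInf fun _ =>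
        add_nonneg (hpos q') (by split_ifs <;> simp)
end
end

section
/- Let X be a reflexive Banach space with dual Y, φ ∈ Γ₀(X), ε > 0, M = Graph(∂φ), and A = {0} × closed-ball_Y(0,ε). Then for every y ∈ Y the section {x ∈ X : (x,y) ∈ M + A} equals ⋃_{‖ȳ - y‖ ≤ ε} ∂φ*(ȳ), and this set is closed (in the norm topology of X). -/
noncomputable section
open scoped Pointwise

variable {X : Type*} [NormedAddCommGroup X] [NormedSpace ℝ X]

/-- Fenchel conjugate of `φ : X → ℝ ∪ {+∞}`, defined on the dual space. -/
def fenchelConj (φ : X → EReal) (y : X →L[ℝ] ℝ) : EReal :=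
  ⨆ x : X, (y x : EReal) - φ x

/-- Subdifferential of `φ : X → ℝ ∪ {+∞}`, with values in the dual space. -/
def subdiff (φ : X → EReal) (x : X) : Set (X →L[ℝ] ℝ) :=
  {u | ∀ z : X, (u (z - x) : EReal) + φ x ≤ φ z}

/-- Subdifferential of a function on the dual space, with values in `X`
(identifying `X` with its bidual via reflexivity). -/
def subdiffStar (ψ : (X →L[ℝ] ℝ) → EReal) (y : X →L[ℝ] ℝ) : Set X :=
  {x | ∀ z : X →L[ℝ] ℝ, (((z - y) x) : EReal) + ψ y ≤ ψ z}


/-!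
Writing `B = closedBall y ε`, both sides of the section identity are `{x | ∃ ȳ ∈ B, ȳ ∈ ∂φ(x)}`:
adding `{0} × B̄(0, ε)` only moves the dual coordinate, and `ȳ ∈ ∂φ(x) ↔ x ∈ ∂φ*(ȳ)` because
both say that the Fenchel–Young inequality `φ x + φ* ȳ ≥ ȳ x` is an equality. For the second
subdifferential this needs Fenchel–Moreau, `φ x ≤ c ↔ ∀ z, z x - c ≤ φ* z`, obtained by separating
`(x, c)` from the closed convex epigraph of `φ` in `X × ℝ`.

Closedness: if `xₙ → x` and `ȳₙ ∈ ∂φ(xₙ) ∩ B`, the `ȳₙ` cluster, along an ultrafilter, at some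
`ȳ` of the weak*-compact ball `B`. Since the `ȳₙ` are bounded, `ȳₙ (z - xₙ) → ȳ (z - x)`, and
lower semicontinuity of `φ` carries the subgradient inequality to the limit.
-/

open Filter Topology

theorem ConvexE.convex_epigraph {V : Type*} [AddCommGroup V] [Module ℝ V] {f : V → EReal}
    (hf : ConvexE f) : Convex ℝ {p : V × ℝ | f p.1 ≤ p.2} := by
  rintro ⟨v₁, t₁⟩ h₁ ⟨v₂, t₂⟩ h₂ a b ha hb hab
  calc f (a • v₁ + b • v₂) ≤ (a : EReal) * f v₁ + (b : EReal) * f v₂ := hf v₁ v₂ a b ha hb hab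
    _ ≤ (a : EReal) * t₁ + (b : EReal) * t₂ := by gcongr; exacts [h₁, h₂]
    _ = ((a • (v₁, t₁) + b • (v₂, t₂)).2 : ℝ) := by simp

theorem LowerSemicontinuous.isClosed_real_epigraph {V : Type*} [TopologicalSpace V]
    {f : V → EReal} (hf : LowerSemicontinuous f) : IsClosed {p : V × ℝ | f p.1 ≤ p.2} :=
  hf.isClosed_epigraph.preimage
    (continuous_fst.prodMk (continuous_coe_real_ereal.comp continuous_snd))

theorem EReal.coe_le_iff_forall_le_coe {a : ℝ} {e : EReal} :
    (a : EReal) ≤ e ↔ ∀ s : ℝ, e ≤ s → a ≤ s := by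
  refine ⟨fun h s hs => ?_, fun h => EReal.le_of_forall_lt_iff_le.1 fun s hs => ?_⟩
  · exact_mod_cast h.trans hs
  · exact_mod_cast h s hs.le

theorem EReal.coe_add_le_of_forall_lt {a : ℝ} {e f : EReal}
    (h : ∀ c : ℝ, (c : EReal) < e → ((a + c : ℝ) : EReal) ≤ f) : (a : EReal) + e ≤ f := by
  rw [add_comm, ← EReal.le_sub_iff_add_le (.inl (EReal.coe_ne_bot a)) (.inl (EReal.coe_ne_top a)),
    ← EReal.ge_of_forall_gt_iff_ge]
  intro c hc
  rw [EReal.le_sub_iff_add_le (.inl (EReal.coe_ne_bot a)) (.inl (EReal.coe_ne_top a)), add_comm]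
  exact_mod_cast h c hc

section Conjugate

variable {φ : X → EReal}

theorem coe_sub_le_fenchelConj (y : X →L[ℝ] ℝ) {v : X} {r : ℝ} (hv : φ v = r) :
    ((y v - r : ℝ) : EReal) ≤ fenchelConj φ y := by
  rw [EReal.coe_sub, ← hv]
  exact le_iSup (fun x => (y x : EReal) - φ x) v

theorem fenchelConj_le_coe_iff {y : X →L[ℝ] ℝ} {c : ℝ} :
    fenchelConj φ y ≤ c ↔ ∀ v, ((y v - c : ℝ) : EReal) ≤ φ v := by
  refine iSup_le_iff.trans (forall_congr' fun v => ?_)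
  induction φ v using EReal.rec with
  | bot => simpa using EReal.coe_ne_bot (y v - c)
  | top => simp
  | coe s =>
    norm_cast
    constructor <;> intro h <;> linarith

theorem fenchelConj_le_coe_iff' {y : X →L[ℝ] ℝ} {c : ℝ} :
    fenchelConj φ y ≤ c ↔ ∀ v (s : ℝ), φ v ≤ s → y v - s ≤ c := by
  simp only [fenchelConj_le_coe_iff, EReal.coe_le_iff_forall_le_coe]
  refine forall_congr' fun v => forall_congr' fun s => imp_congr_right fun _ => ?_
  constructor <;> intro h <;> linarith

theorem exists_separation_epigraph (hconv : ConvexE φ) (hlsc : LowerSemicontinuous φ)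
    {x : X} {c : ℝ} (h : (c : EReal) < φ x) :
    ∃ (g : X →L[ℝ] ℝ) (a u : ℝ), g x + c * a < u ∧ ∀ v (s : ℝ), φ v ≤ s → u < g v + s * a := by
  have hnot : (x, c) ∉ {p : X × ℝ | φ p.1 ≤ p.2} := not_le.2 h
  obtain ⟨f, u, hfx, hf⟩ := geometric_hahn_banach_point_closed hconv.convex_epigraph
    hlsc.isClosed_real_epigraph hnot
  have hdecomp : ∀ v (s : ℝ), f (v, s) = f.comp (.inl ℝ X ℝ) v + s * f (0, 1) := by
    intro v s
    rw [ContinuousLinearMap.comp_apply, ContinuousLinearMap.inl_apply, ← smul_eq_mul,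
      ← map_smul, ← map_add]
    simp
  refine ⟨f.comp (.inl ℝ X ℝ), f (0, 1), u, ?_, fun v s hv => ?_⟩
  · rw [← hdecomp]; exact hfx
  · rw [← hdecomp]; exact hf _ hv

theorem fenchelConj_le_of_separation {g : X →L[ℝ] ℝ} {a u : ℝ} (ha : 0 < a)
    (hsep : ∀ v (s : ℝ), φ v ≤ s → u < g v + s * a) :
    fenchelConj φ (-a⁻¹ • g) ≤ ((-(u / a) : ℝ) : EReal) := by
  refine fenchelConj_le_coe_iff'.2 fun v s hv => ?_
  have hgap := div_pos (sub_pos.2 (hsep v s hv)) ha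
  have key : (-a⁻¹ • g) v - s = -(u / a) - (g v + s * a - u) / a := by
    simp only [smul_apply, smul_eq_mul]
    field_simp
    ring
  linarith

theorem fenchelConj_sub_smul_le {z₀ g : X →L[ℝ] ℝ} {τ₀ u l : ℝ}
    (hz₀ : fenchelConj φ z₀ ≤ τ₀) (hl : 0 ≤ l) (hsep : ∀ v (s : ℝ), φ v ≤ s → u < g v) :
    fenchelConj φ (z₀ - l • g) ≤ ((τ₀ - l * u : ℝ) : EReal) := by
  refine fenchelConj_le_coe_iff'.2 fun v s hv => ?_
  have h₀ := fenchelConj_le_coe_iff'.1 hz₀ v s hv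
  have hg := mul_le_mul_of_nonneg_left (hsep v s hv).le hl
  simp only [sub_apply, smul_apply, smul_eq_mul]
  linarith

theorem Gamma0.exists_eq_coe (hφ : Gamma0 φ) : ∃ (x₀ : X) (r : ℝ), φ x₀ = r := by
  obtain ⟨x₀, htop⟩ := hφ.2.1
  exact ⟨x₀, _, (EReal.coe_toReal htop (hφ.1 x₀)).symm⟩

theorem Gamma0.exists_fenchelConj_le (hφ : Gamma0 φ) :
    ∃ (z : X →L[ℝ] ℝ) (τ : ℝ), fenchelConj φ z ≤ τ := by
  obtain ⟨x₀, r, hx₀⟩ := hφ.exists_eq_coe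
  obtain ⟨g, a, u, hlt, hsep⟩ := exists_separation_epigraph hφ.2.2.1 hφ.2.2.2 (c := r - 1)
    (by rw [hx₀]; exact_mod_cast sub_one_lt r)
  have := hsep x₀ r hx₀.le
  exact ⟨_, _, fenchelConj_le_of_separation (by linarith) hsep⟩

theorem nonneg_of_separation_epigraph {g : X →L[ℝ] ℝ} {a u : ℝ}
    (hsep : ∀ v (s : ℝ), φ v ≤ s → u < g v + s * a) {x₀ : X} {r : ℝ} (hx₀ : φ x₀ = r) :
    0 ≤ a := by
  by_contra! ha
  have hr := hsep x₀ r hx₀.le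
  -- for `a < 0` the vertical ray above `x₀` in the epigraph crosses the hyperplane at height `s`
  set s := r - (g x₀ + r * a - u) / a
  have hs : r ≤ s := by
    have := div_neg_of_pos_of_neg (sub_pos.2 hr) ha
    linarith
  have hsu : g x₀ + s * a = u := by
    simp only [s]
    field_simp [ha.ne]
    ring
  have := hsep x₀ s (hx₀.trans_le (by exact_mod_cast hs))
  linarith

theorem Gamma0.exists_fenchelConj_le_of_lt (hφ : Gamma0 φ) {x : X} {c : ℝ}
    (h : (c : EReal) < φ x) :
    ∃ (z : X →L[ℝ] ℝ) (τ : ℝ), fenchelConj φ z ≤ τ ∧ c < z x - τ := by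
  obtain ⟨g, a, u, hlt, hsep⟩ := exists_separation_epigraph hφ.2.2.1 hφ.2.2.2 h
  obtain ⟨x₀, r, hx₀⟩ := hφ.exists_eq_coe
  rcases (nonneg_of_separation_epigraph hsep hx₀).lt_or_eq with ha | rfl
  · refine ⟨_, _, fenchelConj_le_of_separation ha hsep, ?_⟩
    have key : (-a⁻¹ • g) x - -(u / a) = c + (u - (g x + c * a)) / a := by
      simp only [smul_apply, smul_eq_mul]
      field_simp
      ring
    rw [key]
    linarith [div_pos (sub_pos.2 hlt) ha]
  · -- a vertical hyperplane: tilt an affine minorant of `φ` by a large multiple of `g`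
    obtain ⟨z₀, τ₀, h₀⟩ := hφ.exists_fenchelConj_le
    simp only [mul_zero, add_zero] at hlt hsep
    set l := (|c - (z₀ x - τ₀)| + 1) / (u - g x)
    have hl : l * (u - g x) = |c - (z₀ x - τ₀)| + 1 := div_mul_cancel₀ _ (by linarith)
    refine ⟨z₀ - l • g, τ₀ - l * u,
      fenchelConj_sub_smul_le h₀ (div_nonneg (by positivity) (by linarith)) hsep, ?_⟩
    simp only [sub_apply, smul_apply, smul_eq_mul]
    linarith [le_abs_self (c - (z₀ x - τ₀))]

theorem Gamma0.le_coe_iff_forall_le_fenchelConj (hφ : Gamma0 φ) {x : X} {c : ℝ} :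
    φ x ≤ c ↔ ∀ z : X →L[ℝ] ℝ, ((z x - c : ℝ) : EReal) ≤ fenchelConj φ z := by
  refine ⟨fun h z => ?_, fun h => ?_⟩
  · calc ((z x - c : ℝ) : EReal) = z x - c := EReal.coe_sub _ _
      _ ≤ z x - φ x := EReal.sub_le_sub le_rfl h
      _ ≤ fenchelConj φ z := le_iSup (fun v => (z v : EReal) - φ v) x
  · by_contra! hlt
    obtain ⟨z, τ, hτ, hc⟩ := hφ.exists_fenchelConj_le_of_lt hlt
    have := (h z).trans hτ
    norm_cast at this
    linarith

theorem mem_subdiff_iff_fenchelConj_le {x : X} {y : X →L[ℝ] ℝ} {r : ℝ} (hx : φ x = r) :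
    y ∈ subdiff φ x ↔ fenchelConj φ y ≤ ((y x - r : ℝ) : EReal) := by
  rw [fenchelConj_le_coe_iff]
  refine forall_congr' fun z => ?_
  rw [hx, map_sub, ← EReal.coe_add, sub_sub_eq_add_sub, sub_add_eq_add_sub]

theorem mem_subdiffStar_iff {ψ : (X →L[ℝ] ℝ) → EReal} {x : X} {y : X →L[ℝ] ℝ} {t : ℝ}
    (hy : ψ y = t) :
    x ∈ subdiffStar ψ y ↔ ∀ z : X →L[ℝ] ℝ, ((z x - (y x - t) : ℝ) : EReal) ≤ ψ z := by
  refine forall_congr' fun z => ?_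
  rw [hy, sub_apply, ← EReal.coe_add, sub_sub_eq_add_sub, sub_add_eq_add_sub]

theorem eq_top_of_mem_subdiff {x : X} {y : X →L[ℝ] ℝ} (h : y ∈ subdiff φ x) (hx : φ x = ⊤)
    (z : X) : φ z = ⊤ := by
  have := h z
  rwa [hx, EReal.add_top_of_ne_bot (EReal.coe_ne_bot _), top_le_iff] at this

theorem eq_top_of_mem_subdiffStar {ψ : (X →L[ℝ] ℝ) → EReal} {x : X} {y : X →L[ℝ] ℝ}
    (h : x ∈ subdiffStar ψ y) (hy : ψ y = ⊤) (z : X →L[ℝ] ℝ) : ψ z = ⊤ := by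
  have := h z
  rwa [hy, EReal.add_top_of_ne_bot (EReal.coe_ne_bot _), top_le_iff] at this

theorem Gamma0.mem_subdiff_iff_mem_subdiffStar (hφ : Gamma0 φ) {x : X} {y : X →L[ℝ] ℝ} :
    y ∈ subdiff φ x ↔ x ∈ subdiffStar (fenchelConj φ) y := by
  constructor
  · intro h
    have hx_top : φ x ≠ ⊤ := fun hx => by
      obtain ⟨x₀, r₀, hx₀⟩ := hφ.exists_eq_coe
      simpa [hx₀] using eq_top_of_mem_subdiff h hx x₀
    set r := (φ x).toReal
    have hx : φ x = r := (EReal.coe_toReal hx_top (hφ.1 x)).symm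
    have hy : fenchelConj φ y = ((y x - r : ℝ) : EReal) :=
      ((mem_subdiff_iff_fenchelConj_le hx).1 h).antisymm (coe_sub_le_fenchelConj y hx)
    rw [mem_subdiffStar_iff hy, sub_sub_cancel]
    exact hφ.le_coe_iff_forall_le_fenchelConj.1 hx.le
  · intro h
    have hy_top : fenchelConj φ y ≠ ⊤ := fun hy => by
      obtain ⟨z₀, τ₀, hz₀⟩ := hφ.exists_fenchelConj_le
      simp [eq_top_of_mem_subdiffStar h hy z₀] at hz₀
    have hy_bot : fenchelConj φ y ≠ ⊥ := fun hy => by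
      obtain ⟨x₀, r₀, hx₀⟩ := hφ.exists_eq_coe
      exact EReal.coe_ne_bot _ (le_bot_iff.1 (hy ▸ coe_sub_le_fenchelConj y hx₀))
    set t := (fenchelConj φ y).toReal
    have hy : fenchelConj φ y = t := (EReal.coe_toReal hy_top hy_bot).symm
    have hle : φ x ≤ ((y x - t : ℝ) : EReal) :=
      hφ.le_coe_iff_forall_le_fenchelConj.2 ((mem_subdiffStar_iff hy).1 h)
    have hx_top : φ x ≠ ⊤ := ne_top_of_le_ne_top (EReal.coe_ne_top _) hle
    set r := (φ x).toReal
    have hx : φ x = r := (EReal.coe_toReal hx_top (hφ.1 x)).symm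
    rw [mem_subdiff_iff_fenchelConj_le hx, hy, EReal.coe_le_coe_iff]
    rw [hx, EReal.coe_le_coe_iff] at hle
    linarith

end Conjugate

section Closedness

variable {φ : X → EReal}

theorem mem_subdiff_of_tendsto {ι : Type*} {l : Filter ι} [l.NeBot]
    (hlsc : LowerSemicontinuous φ) {u : ι → X} {w : ι → X →L[ℝ] ℝ} {x : X}
    {η : X →L[ℝ] ℝ} {R : ℝ} (hu : Tendsto u l (𝓝 x))
    (hw : ∀ v, Tendsto (fun i => w i v) l (𝓝 (η v))) (hR : ∀ i, ‖w i‖ ≤ R)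
    (hsub : ∀ i, w i ∈ subdiff φ (u i)) : η ∈ subdiff φ x := by
  intro z
  -- the bound on `‖w i‖` is what makes the pairing jointly continuous
  have hdrift : Tendsto (fun i => w i (x - u i)) l (𝓝 0) := by
    refine squeeze_zero_norm (fun i => ((w i).le_opNorm _).trans
      (mul_le_mul_of_nonneg_right (hR i) (norm_nonneg _))) ?_
    simpa using ((tendsto_const_nhds (x := x)).sub hu).norm.const_mul R
  have hlim : Tendsto (fun i => w i (z - u i)) l (𝓝 (η (z - x))) := by
    simpa [← map_add] using (hw (z - x)).add hdrift
  refine EReal.coe_add_le_of_forall_lt fun c hc => ?_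
  have hclosed : IsClosed {t : ℝ | ((t + c : ℝ) : EReal) ≤ φ z} :=
    isClosed_le (continuous_coe_real_ereal.comp (continuous_add_const c)) continuous_const
  refine hclosed.mem_of_tendsto hlim ?_
  filter_upwards [hu.eventually (hlsc x c hc)] with i hi
  calc ((w i (z - u i) + c : ℝ) : EReal) ≤ w i (z - u i) + φ (u i) := by
        rw [EReal.coe_add]; gcongr
    _ ≤ φ z := hsub i z

theorem isClosed_setOf_exists_mem_subdiff (hlsc : LowerSemicontinuous φ)
    (y : X →L[ℝ] ℝ) (ε : ℝ) :
    IsClosed {x | ∃ y' ∈ Metric.closedBall y ε, y' ∈ subdiff φ x} := by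
  refine IsSeqClosed.isClosed fun u x hu hux => ?_
  choose w hw_ball hw_sub using hu
  set K := WeakDual.toStrongDual ⁻¹' Metric.closedBall y ε
  set U : Ultrafilter ℕ := Ultrafilter.of atTop
  obtain ⟨η, hηK, hη⟩ := (WeakDual.isCompact_closedBall (𝕜 := ℝ) y ε).ultrafilter_le_nhds
    (U.map (StrongDual.toWeakDual ∘ w)) (le_principal_iff.2 (Ultrafilter.mem_map.2 (univ_mem' hw_ball)))
  refine ⟨WeakDual.toStrongDual η, hηK, mem_subdiff_of_tendsto hlsc
    (hux.mono_left (Ultrafilter.of_le _)) (fun v => ?_)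
    (fun n => norm_le_of_mem_closedBall (hw_ball n)) hw_sub⟩
  exact ((WeakDual.eval_continuous v).tendsto η).comp hη

end Closedness

theorem setOf_mem_add_zero_prod_closedBall {V Y : Type*} [AddGroup V] [SeminormedAddCommGroup Y]
    (M : Set (V × Y)) (y : Y) (ε : ℝ) :
    {x | (x, y) ∈ M + {0} ×ˢ Metric.closedBall 0 ε} =
      {x | ∃ y' ∈ Metric.closedBall y ε, (x, y') ∈ M} := by
  ext x
  simp only [Set.mem_ofPred_eq, Set.mem_add, Set.mem_prod, Set.mem_singleton_iff,
    Metric.mem_closedBall, Prod.exists, Prod.mk_add_mk, Prod.mk.injEq]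
  constructor
  · rintro ⟨x', y', hm, _, b, ⟨rfl, hb⟩, rfl, rfl⟩
    refine ⟨y', ?_, by simpa using hm⟩
    simpa [dist_eq_norm] using hb
  · rintro ⟨y', hy', hm⟩
    exact ⟨x, y', hm, 0, y - y', ⟨rfl, by rwa [dist_zero_right, ← dist_eq_norm']⟩, add_zero x, add_sub_cancel y' y⟩

theorem blurred_section_eq_and_closed_general
    (φ : X → EReal) (hφ : Gamma0 φ) (ε : ℝ)
    (M A : Set (X × (X →L[ℝ] ℝ)))
    (hM : M = {q | q.2 ∈ subdiff φ q.1})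
    (hA : A = {0} ×ˢ Metric.closedBall 0 ε) :
    ∀ y : X →L[ℝ] ℝ,
      {x | (x, y) ∈ M + A} =
        (⋃ y' ∈ Metric.closedBall y ε, subdiffStar (fenchelConj φ) y') ∧
      IsClosed (⋃ y' ∈ Metric.closedBall y ε, subdiffStar (fenchelConj φ) y') := by
  intro y
  have hunion : (⋃ y' ∈ Metric.closedBall y ε, subdiffStar (fenchelConj φ) y') =
      {x | ∃ y' ∈ Metric.closedBall y ε, y' ∈ subdiff φ x} := by
    ext x
    simp [hφ.mem_subdiff_iff_mem_subdiffStar]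
  subst hM hA
  rw [hunion, setOf_mem_add_zero_prod_closedBall]
  exact ⟨rfl, isClosed_setOf_exists_mem_subdiff hφ.2.2.2 y ε⟩

/-- for `M = Graph(∂φ)` and `A = {0} × B̄_Y(0,ε)`, every section
`{x : (x,y) ∈ M + A}` equals `⋃_{‖y' - y‖ ≤ ε} ∂φ*(y')`, and this set is closed. -/
theorem blurred_section_eq_and_closed [CompleteSpace X]
    (hrefl : Function.Surjective (NormedSpace.inclusionInDoubleDual ℝ X))
    (φ : X → EReal) (hφ : Gamma0 φ) (ε : ℝ) (hε : 0 < ε)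
    (M A : Set (X × (X →L[ℝ] ℝ)))
    (hM : M = {q | q.2 ∈ subdiff φ q.1})
    (hA : A = {0} ×ˢ Metric.closedBall 0 ε) :
    ∀ y : X →L[ℝ] ℝ,
      {x | (x, y) ∈ M + A} =
        (⋃ y' ∈ Metric.closedBall y ε, subdiffStar (fenchelConj φ) y') ∧
      IsClosed (⋃ y' ∈ Metric.closedBall y ε, subdiffStar (fenchelConj φ) y') :=
  blurred_section_eq_and_closed_general φ hφ ε M A hM hA
end
end

section
/- Counterexample in ℝ²: let φ* = χ_F be the indicator of the cone F = {(y₁,y₂) : |y₂| ≤ α y₁} with α ∈ (0,1). Choose y₁ > 0 and ε with (2α/√(1+α²)) y₁ < ε < y₁ √(1+α²), and y = (y₁, α y₁). Then the set ⋃_{‖ȳ - y‖ ≤ ε} ∂φ*(ȳ) equals {λ n₁, λ n₂ : λ ≥ 0} where n₁, n₂ are the (non-proportional) outward normals to the two boundary half-lines of F, and this set is not convex. -/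
/-!
Since `F` is a cone, `∂χ_F(ȳ)` is empty off `F` and for `ȳ ∈ F` it is the set of `x` in the polar
cone `F° = {x | x₀ + α |x₁| ≤ 0}` with `⟪x, ȳ⟫ = 0`. For `ȳ ≠ 0` in `F` this forces
`x₀ = -α |x₁|`, i.e. `x` lies on `ℝ₊ n₁ ∪ ℝ₊ n₂`, and the ball misses `0` because `ε < ‖y‖`.
Conversely, `ℝ₊ n₁` is the normal cone at `y` itself and `ℝ₊ n₂` the normal cone at the foot of
the perpendicular from `y` to the lower boundary line, at distance `2 α y₁ / √(1 + α²) < ε`.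
The midpoint `(-α, 0)` of `n₁` and `n₂` is on neither ray.
-/

noncomputable section
open scoped Classical RealInnerProductSpace

/-- Subdifferential for `EReal`-valued functions on a real inner product space
(the space identified with its dual via the inner product). -/
def subdiffInner {E : Type*} [NormedAddCommGroup E] [InnerProductSpace ℝ E]
    (ψ : E → EReal) (y : E) : Set E :=
  {x | ∀ z : E, ((⟪x, z - y⟫ : ℝ) : EReal) + ψ y ≤ ψ z}

section IndicatorOfCone

variable {E : Type*} [NormedAddCommGroup E] [InnerProductSpace ℝ E]

theorem mem_subdiffInner_indicator_iff {F : Set E} (hF : F.Nonempty) {ψ : E → EReal}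
    (hψ : ∀ v, ψ v = if v ∈ F then 0 else ⊤) {x y : E} :
    x ∈ subdiffInner ψ y ↔ y ∈ F ∧ ∀ z ∈ F, ⟪x, z - y⟫ ≤ 0 := by
  by_cases hy : y ∈ F
  · simp only [subdiffInner, Set.mem_ofPred_eq, hψ, hy, if_true, add_zero, true_and]
    refine forall_congr' fun z => ?_
    by_cases hz : z ∈ F <;> simp [hz]
  · obtain ⟨z, hz⟩ := hF
    simp only [hy, false_and, iff_false]
    intro hx
    simpa [hψ, hy, hz] using hx z

theorem forall_inner_sub_nonpos_iff_of_smul_mem {F : Set E}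
    (hF : ∀ z ∈ F, ∀ t : ℝ, 0 ≤ t → t • z ∈ F) {x y : E} (hy : y ∈ F) :
    (∀ z ∈ F, ⟪x, z - y⟫ ≤ 0) ↔ (∀ z ∈ F, ⟪x, z⟫ ≤ 0) ∧ ⟪x, y⟫ = 0 := by
  constructor
  · intro hx
    have h0 : 0 ≤ ⟪x, y⟫ := by simpa [zero_smul] using hx _ (hF y hy 0 le_rfl)
    have h2 : ⟪x, y⟫ ≤ 0 := by
      have := hx _ (hF y hy 2 zero_le_two)
      rw [inner_sub_right, real_inner_smul_right] at this
      linarith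
    refine ⟨fun z hz => ?_, le_antisymm h2 h0⟩
    have := hx z hz
    rw [inner_sub_right] at this
    linarith
  · rintro ⟨hx, hxy⟩ z hz
    rw [inner_sub_right, hxy, sub_zero]
    exact hx z hz

theorem mem_subdiffInner_indicator_iff_of_smul_mem {F : Set E} (hF : F.Nonempty)
    (hFsmul : ∀ z ∈ F, ∀ t : ℝ, 0 ≤ t → t • z ∈ F) {ψ : E → EReal}
    (hψ : ∀ v, ψ v = if v ∈ F then 0 else ⊤) {x y : E} :
    x ∈ subdiffInner ψ y ↔ y ∈ F ∧ (∀ z ∈ F, ⟪x, z⟫ ≤ 0) ∧ ⟪x, y⟫ = 0 := by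
  rw [mem_subdiffInner_indicator_iff hF hψ]
  exact and_congr_right (forall_inner_sub_nonpos_iff_of_smul_mem hFsmul)

end IndicatorOfCone

namespace EuclideanSpace

theorem inner_fin_two (x z : EuclideanSpace ℝ (Fin 2)) : ⟪x, z⟫ = x 0 * z 0 + x 1 * z 1 := by
  simp [PiLp.inner_apply, Fin.sum_univ_two, mul_comm]

theorem dist_fin_two (x z : EuclideanSpace ℝ (Fin 2)) :
    dist x z = √((x 0 - z 0) ^ 2 + (x 1 - z 1) ^ 2) := by
  simp [EuclideanSpace.dist_eq, Fin.sum_univ_two, Real.dist_eq, sq_abs]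

end EuclideanSpace

open EuclideanSpace

section Sector

variable {α : ℝ}

theorem smul_mem_sector {z : EuclideanSpace ℝ (Fin 2)} (hz : |z 1| ≤ α * z 0) {t : ℝ}
    (ht : 0 ≤ t) : |(t • z) 1| ≤ α * (t • z) 0 := by
  simp only [PiLp.smul_apply, smul_eq_mul, abs_mul, abs_of_nonneg ht]
  nlinarith

theorem apply_zero_pos_of_mem_sector (hα : 0 < α) {y : EuclideanSpace ℝ (Fin 2)} (hy : |y 1| ≤ α * y 0)
    (hne : y ≠ 0) : 0 < y 0 := by
  by_contra! h
  have h0 : y 0 = 0 := le_antisymm h (by nlinarith [abs_nonneg (y 1)])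
  have h1 : y 1 = 0 := abs_nonpos_iff.mp (by simpa [h0] using hy)
  exact hne (by ext i; fin_cases i <;> simp [h0, h1])

theorem forall_inner_nonpos_sector_iff (hα : 0 < α) (x : EuclideanSpace ℝ (Fin 2)) :
    (∀ z : EuclideanSpace ℝ (Fin 2), |z 1| ≤ α * z 0 → ⟪x, z⟫ ≤ 0) ↔ x 0 + α * |x 1| ≤ 0 := by
  constructor
  · intro hx
    have hup := hx !₂[1, α] (by simp [abs_of_pos hα])
    have hlow := hx !₂[1, -α] (by simp [abs_of_pos hα])
    simp only [inner_fin_two, Matrix.cons_val_zero, Matrix.cons_val_one, mul_one] at hup hlow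
    cases abs_cases (x 1) <;> nlinarith
  · intro hx z hz
    have hz0 : 0 ≤ z 0 := by nlinarith [abs_nonneg (z 1)]
    rw [inner_fin_two]
    nlinarith [neg_abs_le (x 1), le_abs_self (x 1), abs_le.mp hz, abs_nonneg (x 1)]

theorem eq_neg_mul_abs_of_inner_eq_zero {x y : EuclideanSpace ℝ (Fin 2)}
    (hx : x 0 + α * |x 1| ≤ 0) (hy : |y 1| ≤ α * y 0) (hy0 : 0 < y 0) (hxy : ⟪x, y⟫ = 0) :
    x 0 = -α * |x 1| := by
  rw [inner_fin_two] at hxy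
  have h : 0 ≤ y 0 * (x 0 + α * |x 1|) :=
    calc 0 = x 0 * y 0 + x 1 * y 1 := hxy.symm
      _ ≤ x 0 * y 0 + |x 1| * |y 1| := by
        rw [← abs_mul]; gcongr; exact le_abs_self _
      _ ≤ x 0 * y 0 + |x 1| * (α * y 0) := by gcongr
      _ = y 0 * (x 0 + α * |x 1|) := by ring
  have := le_antisymm (mul_nonpos_of_nonneg_of_nonpos hy0.le hx) h
  linarith [(mul_eq_zero.mp this).resolve_left hy0.ne']

theorem exists_nonneg_smul_or_smul_iff {n₁ n₂ : EuclideanSpace ℝ (Fin 2)}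
    (hn₁ : n₁ 0 = -α ∧ n₁ 1 = 1) (hn₂ : n₂ 0 = -α ∧ n₂ 1 = -1) (x : EuclideanSpace ℝ (Fin 2)) :
    (∃ l : ℝ, 0 ≤ l ∧ (x = l • n₁ ∨ x = l • n₂)) ↔ x 0 = -α * |x 1| := by
  constructor
  · rintro ⟨l, hl, rfl | rfl⟩ <;> simp [hn₁, hn₂, abs_of_nonneg hl, mul_comm]
  · intro hx
    rcases le_or_gt 0 (x 1) with h | h
    · refine ⟨x 1, h, Or.inl ?_⟩
      ext i; fin_cases i <;> simp [hn₁, hx, abs_of_nonneg h, mul_comm]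
    · refine ⟨-x 1, by linarith, Or.inr ?_⟩
      ext i; fin_cases i <;> simp [hn₂, hx, abs_of_neg h, mul_comm]

theorem not_convex_setOf_eq_neg_mul_abs (hα : α ≠ 0) :
    ¬ Convex ℝ {x : EuclideanSpace ℝ (Fin 2) | x 0 = -α * |x 1|} := by
  intro hconv
  have hmid := hconv (x := !₂[-α, 1]) (y := !₂[-α, -1]) (by simp) (by simp)
    (by norm_num : (0 : ℝ) ≤ 1 / 2) (by norm_num : (0 : ℝ) ≤ 1 / 2) (by norm_num)
  exact hα (by simpa using hmid)

end Sector

section Ball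

variable {α y₁ : ℝ} {y : EuclideanSpace ℝ (Fin 2)}

theorem dist_zero_eq_mul_sqrt (hy₁ : 0 ≤ y₁) (hy : y 0 = y₁ ∧ y 1 = α * y₁) :
    dist 0 y = y₁ * √(1 + α ^ 2) := by
  rw [dist_fin_two, hy.1, hy.2, ← Real.sqrt_sq (by positivity : 0 ≤ y₁ * √(1 + α ^ 2)),
    mul_pow, Real.sq_sqrt (by positivity)]
  simp only [PiLp.zero_apply]
  ring_nf

-- `t (1, -α)` with `t = y₁ (1 - α²) / (1 + α²)` is the foot of the perpendicular from `y` to the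
-- lower boundary line of the sector.
theorem dist_foot_eq (hα : 0 ≤ α) (hy₁ : 0 ≤ y₁) (hy : y 0 = y₁ ∧ y 1 = α * y₁) :
    dist !₂[y₁ * (1 - α ^ 2) / (1 + α ^ 2), -α * (y₁ * (1 - α ^ 2) / (1 + α ^ 2))] y =
      2 * α / √(1 + α ^ 2) * y₁ := by
  have hs : 0 < 1 + α ^ 2 := by positivity
  rw [dist_fin_two, hy.1, hy.2, ← Real.sqrt_sq (by positivity : 0 ≤ 2 * α / √(1 + α ^ 2) * y₁)]
  congr 1
  simp only [Matrix.cons_val_zero, Matrix.cons_val_one]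
  rw [mul_pow, div_pow, Real.sq_sqrt hs.le]
  field_simp
  ring

theorem exists_mem_closedBall_mem_sector_inner_eq_zero {ε : ℝ} (hα : α ∈ Set.Ioo 0 1)
    (hy₁ : 0 < y₁) (hεl : 2 * α / √(1 + α ^ 2) * y₁ < ε) (hy : y 0 = y₁ ∧ y 1 = α * y₁)
    {x : EuclideanSpace ℝ (Fin 2)} (hx : x 0 = -α * |x 1|) :
    ∃ y' ∈ Metric.closedBall y ε, |y' 1| ≤ α * y' 0 ∧ ⟪x, y'⟫ = 0 := by
  obtain ⟨hα0, hα1⟩ := hα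
  rcases le_or_gt 0 (x 1) with hx1 | hx1
  · refine ⟨y, Metric.mem_closedBall_self (lt_of_le_of_lt (by positivity) hεl).le, ?_, ?_⟩
    · rw [hy.1, hy.2, abs_of_nonneg (by positivity)]
    · rw [inner_fin_two, hx, hy.1, hy.2, abs_of_nonneg hx1]
      ring
  · have ht : 0 ≤ y₁ * (1 - α ^ 2) / (1 + α ^ 2) :=
      div_nonneg (mul_nonneg hy₁.le (by nlinarith)) (by positivity)
    refine ⟨_, (dist_foot_eq hα0.le hy₁.le hy).trans_le hεl.le, ?_, ?_⟩
    · simp [abs_mul, abs_of_pos hα0, abs_of_nonneg ht]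
    · simp only [inner_fin_two, hx, abs_of_neg hx1, Matrix.cons_val_zero, Matrix.cons_val_one]
      ring

end Ball

/-- counterexample in `ℝ²`.  For `φ* = χ_F` with
`F = {(y₁,y₂) : |y₂| ≤ α y₁}`, `0 < α < 1`, a point `y = (y₁, α y₁)` on the
boundary and `(2α/√(1+α²)) y₁ < ε < y₁ √(1+α²)`, the set
`⋃_{‖y' - y‖ ≤ ε} ∂φ*(y')` is the union of the two rays spanned by the outward
normals `n₁ = (-α,1)`, `n₂ = (-α,-1)`, and it is not convex. -/
theorem cone_counterexample (α : ℝ) (hα : α ∈ Set.Ioo (0 : ℝ) 1)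
    (y₁ ε : ℝ) (hy₁ : 0 < y₁)
    (hεl : 2 * α / Real.sqrt (1 + α ^ 2) * y₁ < ε)
    (hεu : ε < y₁ * Real.sqrt (1 + α ^ 2))
    (F : Set (EuclideanSpace ℝ (Fin 2)))
    (hF : F = {v | |v 1| ≤ α * v 0})
    (φstar : EuclideanSpace ℝ (Fin 2) → EReal)
    (hφstar : ∀ v, φstar v = if v ∈ F then (0 : EReal) else ⊤)
    (y n₁ n₂ : EuclideanSpace ℝ (Fin 2))
    (hy : y 0 = y₁ ∧ y 1 = α * y₁)
    (hn₁ : n₁ 0 = -α ∧ n₁ 1 = 1) (hn₂ : n₂ 0 = -α ∧ n₂ 1 = -1) :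
    (⋃ y' ∈ Metric.closedBall y ε, subdiffInner φstar y') =
      {x | ∃ l : ℝ, 0 ≤ l ∧ (x = l • n₁ ∨ x = l • n₂)} ∧
    ¬ Convex ℝ {x : EuclideanSpace ℝ (Fin 2) |
        ∃ l : ℝ, 0 ≤ l ∧ (x = l • n₁ ∨ x = l • n₂)} := by
  subst hF
  have hα0 : 0 < α := hα.1
  have hrays : {x | ∃ l : ℝ, 0 ≤ l ∧ (x = l • n₁ ∨ x = l • n₂)} =
      {x : EuclideanSpace ℝ (Fin 2) | x 0 = -α * |x 1|} :=
    Set.ext (exists_nonneg_smul_or_smul_iff hn₁ hn₂)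
  rw [hrays]
  refine ⟨Set.ext fun x => ?_, not_convex_setOf_eq_neg_mul_abs hα0.ne'⟩
  have h0 : (0 : EuclideanSpace ℝ (Fin 2)) ∈ {v : EuclideanSpace ℝ (Fin 2) | |v 1| ≤ α * v 0} := by
    simp
  simp only [Set.mem_iUnion, exists_prop,
    mem_subdiffInner_indicator_iff_of_smul_mem ⟨0, h0⟩ (fun _ hz _ ht => smul_mem_sector hz ht)
      hφstar]
  simp only [Set.mem_ofPred_eq, forall_inner_nonpos_sector_iff hα0]
  constructor
  · rintro ⟨y', hy'ε, hy'F, hx, hxy'⟩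
    have hy'0 : y' ≠ 0 := by
      rintro rfl
      exact hεu.not_ge (dist_zero_eq_mul_sqrt hy₁.le hy ▸ hy'ε)
    exact eq_neg_mul_abs_of_inner_eq_zero hx hy'F (apply_zero_pos_of_mem_sector hα0 hy'F hy'0) hxy'
  · intro hx
    obtain ⟨y', hy'ε, hy'F, hxy'⟩ := exists_mem_closedBall_mem_sector_inner_eq_zero hα hy₁ hεl hy hx
    exact ⟨y', hy'ε, hy'F, by linarith, hxy'⟩
end
end

section
/- Let X = ℝ and φ ∈ Γ₀(ℝ), ε > 0. Then for every y ∈ ℝ the set ⋃_{|ȳ - y| ≤ ε} ∂φ*(ȳ) is convex (an interval), i.e., the condition (newc) holds automatically in one dimension. -/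
noncomputable section

/-- Fenchel conjugate on `ℝ` (self-dual via multiplication). -/
def fenchelR (φ : ℝ → EReal) (y : ℝ) : EReal := ⨆ x : ℝ, ((x * y : ℝ) : EReal) - φ x

/-- Subdifferential on `ℝ` (self-dual via multiplication). -/
def subdiffR (ψ : ℝ → EReal) (y : ℝ) : Set ℝ :=
  {x | ∀ z : ℝ, (((z - y) * x : ℝ) : EReal) + ψ y ≤ ψ z}

/-!
`x ∈ ∂ψ(y)` exactly when `y` minimises the tilted function `t ↦ ψ t - t x`. Given
`x₁ ∈ ∂ψ(y₁)`, `x₂ ∈ ∂ψ(y₂)` and `x₁ ≤ x ≤ x₂`, lower semicontinuity of `ψ` gives a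
minimiser `y` of the tilt by `x` on the segment between `y₁` and `y₂`, and it is a global
minimiser: left of `y₁` the difference `t (x₁ - x)` between the tilts by `x` and by `x₁` is
at least its value at `y₁`, where the tilt by `x₁` is minimal, and symmetrically right of `y₂`.
A Fenchel conjugate is a supremum of continuous functions, hence lower semicontinuous.
-/

open Set

def tiltR (ψ : ℝ → EReal) (x t : ℝ) : EReal := ψ t + ((-(t * x) : ℝ) : EReal)

lemma tiltR_eq_add (ψ : ℝ → EReal) (x x₀ t : ℝ) :
    tiltR ψ x t = tiltR ψ x₀ t + ((t * (x₀ - x) : ℝ) : EReal) := by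
  rw [tiltR, tiltR, add_assoc, ← EReal.coe_add]
  ring_nf

lemma mem_subdiffR_iff_isMinOn {ψ : ℝ → EReal} {x y : ℝ} :
    x ∈ subdiffR ψ y ↔ IsMinOn (tiltR ψ x) univ y := by
  simp only [isMinOn_univ_iff, subdiffR, mem_ofPred_eq]
  refine forall_congr' fun z => ?_
  rw [← (EReal.addLECancellable_coe (-(z * x))).add_le_add_iff_right, tiltR, tiltR,
    add_comm _ (ψ y), add_assoc, ← EReal.coe_add]
  ring_nf

lemma LowerSemicontinuous.tiltR {ψ : ℝ → EReal} (hψ : LowerSemicontinuous ψ) (x : ℝ) :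
    LowerSemicontinuous (tiltR ψ x) :=
  hψ.add' (continuous_coe_real_ereal.comp (by fun_prop)).lowerSemicontinuous
    fun _ => EReal.continuousAt_add (Or.inr (EReal.coe_ne_bot _)) (Or.inr (EReal.coe_ne_top _))

lemma tiltR_le_of_isMinOn {ψ : ℝ → EReal} {x₀ y₀ x z : ℝ}
    (hmin : IsMinOn (tiltR ψ x₀) univ y₀) (hzx : 0 ≤ (z - y₀) * (x₀ - x)) :
    tiltR ψ x y₀ ≤ tiltR ψ x z := by
  rw [tiltR_eq_add ψ x x₀, tiltR_eq_add ψ x x₀]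
  exact add_le_add (isMinOn_univ_iff.mp hmin z) (EReal.coe_le_coe_iff.mpr (by nlinarith))

theorem exists_mem_subdiffR_of_mem_Icc {ψ : ℝ → EReal} (hψ : LowerSemicontinuous ψ)
    {x₁ x₂ y₁ y₂ x : ℝ} (h₁ : x₁ ∈ subdiffR ψ y₁) (h₂ : x₂ ∈ subdiffR ψ y₂)
    (hx : x ∈ Icc x₁ x₂) : ∃ y ∈ uIcc y₁ y₂, x ∈ subdiffR ψ y := by
  obtain ⟨y, hy, hmin⟩ := LowerSemicontinuousOn.exists_isMinOn
    (nonempty_uIcc (a := y₁) (b := y₂)) isCompact_uIcc ((hψ.tiltR x).lowerSemicontinuousOn _)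
  rw [mem_subdiffR_iff_isMinOn] at h₁ h₂
  refine ⟨y, hy, mem_subdiffR_iff_isMinOn.mpr <| isMinOn_univ_iff.mpr fun z => ?_⟩
  rcases le_or_gt z y₁ with hz₁ | hz₁
  · exact (hmin left_mem_uIcc).trans (tiltR_le_of_isMinOn h₁ (by nlinarith [hx.1]))
  rcases le_or_gt y₂ z with hz₂ | hz₂
  · exact (hmin right_mem_uIcc).trans (tiltR_le_of_isMinOn h₂ (by nlinarith [hx.2]))
  · exact hmin (Icc_subset_uIcc ⟨hz₁.le, hz₂.le⟩)

theorem Set.OrdConnected.biUnion_subdiffR {ψ : ℝ → EReal} (hψ : LowerSemicontinuous ψ)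
    {s : Set ℝ} (hs : s.OrdConnected) : (⋃ y ∈ s, subdiffR ψ y).OrdConnected := by
  refine ⟨fun x₁ hx₁ x₂ hx₂ x hx => ?_⟩
  simp only [mem_iUnion₂] at hx₁ hx₂ ⊢
  obtain ⟨y₁, hy₁, h₁⟩ := hx₁
  obtain ⟨y₂, hy₂, h₂⟩ := hx₂
  obtain ⟨y, hy, h⟩ := exists_mem_subdiffR_of_mem_Icc hψ h₁ h₂ hx
  exact ⟨y, hs.uIcc_subset hy₁ hy₂ hy, h⟩

lemma lowerSemicontinuous_fenchelR (φ : ℝ → EReal) : LowerSemicontinuous (fenchelR φ) := by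
  refine lowerSemicontinuous_iSup fun x =>
    (continuous_iff_continuousAt.mpr fun y => ?_).lowerSemicontinuous
  have hpair : Continuous fun t : ℝ => (((x * t : ℝ) : EReal), -φ x) :=
    (continuous_coe_real_ereal.comp (continuous_const_mul x)).prodMk continuous_const
  exact (EReal.continuousAt_add (Or.inl (EReal.coe_ne_top _)) (Or.inl (EReal.coe_ne_bot _))).comp
    (f := fun t : ℝ => (((x * t : ℝ) : EReal), -φ x)) hpair.continuousAt

theorem newc_holds_dim_one_general (φ : ℝ → EReal) (ε : ℝ) :
    ∀ y : ℝ, Convex ℝ (⋃ y' ∈ Metric.closedBall y ε, subdiffR (fenchelR φ) y') := fun y =>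
  convex_iff_ordConnected.mpr <| (convex_closedBall y ε).ordConnected.biUnion_subdiffR
    (lowerSemicontinuous_fenchelR φ)

/-- in dimension one, for `φ ∈ Γ₀(ℝ)` and any `y`, the set
`⋃_{|y' - y| ≤ ε} ∂φ*(y')` is convex (an interval): condition (newc) holds
automatically. -/
theorem newc_holds_dim_one (φ : ℝ → EReal) (hφ : Gamma0 φ) (ε : ℝ) (hε : 0 < ε) :
    ∀ y : ℝ, Convex ℝ (⋃ y' ∈ Metric.closedBall y ε, subdiffR (fenchelR φ) y') :=
  newc_holds_dim_one_general φ ε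
end
end
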